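/- In the two-parameter algebra f, if x is homogeneous with r(x) = ∑ x₁⊗x₂ (homogeneous factors), then the bar involution satisfies r(x̄) = ∑ v^{-|x₁|·|x₂|} t^{⟨|x₂|,|x₁|⟩-⟨|x₁|,|x₂|⟩} x̄₂ ⊗ x̄₁. -/

import Mathlib

/-!
STATEMENT 17: In the two-parameter algebra, if x is homogeneous and
r(x) = ∑ x₁⊗x₂ (homogeneous factors), then the bar involution satisfies
r(x̄) = ∑ v^{-|x₁|·|x₂|} t^{⟨|x₂|,|x₁|⟩-⟨|x₁|,|x₂|⟩} x̄₂ ⊗ x̄₁.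

The free algebra 'f is modelled as finitely supported functions on words;
the bar involution fixes each θ_i (hence each word) and acts on scalars by the
ring endomorphism of ℚ(v,t) with v ↦ v⁻¹, t ↦ t (which is unique, since v and
t generate ℚ(v,t) as a field).  The right-hand side applies, to each
bihomogeneous component c·(p,q) of r(x), the twist
v^{-wt(p)·wt(q)} t^{⟨wt(q),wt(p)⟩-⟨wt(p),wt(q)⟩}·bar(c)·(q,p).
-/

noncomputable section

abbrev QVT := FractionRing (MvPolynomial (Fin 2) ℚ)

def v : QVT := algebraMap (MvPolynomial (Fin 2) ℚ) QVT (MvPolynomial.X 0)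

def t : QVT := algebraMap (MvPolynomial (Fin 2) ℚ) QVT (MvPolynomial.X 1)

variable {I : Type*} [Fintype I] [DecidableEq I]

abbrev FF (I : Type*) := FreeMonoid I →₀ QVT

abbrev GG (I : Type*) := (FreeMonoid I × FreeMonoid I) →₀ QVT

def wt (w : FreeMonoid I) : I →₀ ℕ :=
  (w.toList.map fun i => Finsupp.single i 1).sum

def pairF (C : I → I → ℤ) (a b : I →₀ ℕ) : ℤ :=
  a.sum fun i m => b.sum fun j n => (m : ℤ) * C i j * (n : ℤ)

def dotF (C : I → I → ℤ) (a b : I →₀ ℕ) : ℤ :=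
  pairF C a b + pairF C b a

def tw (C : I → I → ℤ) (a b : I →₀ ℕ) : QVT :=
  v ^ (-(dotF C a b)) * t ^ (pairF C a b - pairF C b a)

def mulG (C : I → I → ℤ) (f g : GG I) : GG I :=
  f.sum fun p c => g.sum fun q d =>
    Finsupp.single (p.1 * q.1, p.2 * q.2) (tw C (wt q.1) (wt p.2) * (c * d))

def rW (C : I → I → ℤ) : List I → GG I
  | [] => Finsupp.single (1, 1) 1
  | i :: w =>
      mulG C
        (Finsupp.single (FreeMonoid.of i, 1) 1 + Finsupp.single (1, FreeMonoid.of i) 1)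
        (rW C w)

def rF (C : I → I → ℤ) (f : FF I) : GG I :=
  f.sum fun p c => c • rW C p.toList

/-- The bar involution on 'f: it fixes each word and conjugates scalars by the
bar involution of ℚ(v,t). -/
def barF (barK : QVT →+* QVT) (f : FF I) : FF I :=
  f.mapRange barK (map_zero barK)

/-!
Let `Φ = barSwap C barK` be the bar-semilinear map on the twisted tensor square sending `c · (p ⊗ q)` to
`tw(|q|, |p|) · c̄ · (q ⊗ p)`.  Since the exponents of `tw` are bilinear in the weights, `tw` is
bimultiplicative and `bar (tw a b) = (tw b a)⁻¹`; these two facts make `Φ` multiplicative for the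
twisted product.  `Φ` fixes `r(θ_i) = θ_i ⊗ 1 + 1 ⊗ θ_i`, hence fixes `r(w)` for every word `w`,
and comparing the bar-semilinear maps `x ↦ r(x̄)` and `x ↦ Φ(r(x))` on words gives the theorem.
-/

section

omit [Fintype I] [DecidableEq I]

lemma v_ne_zero : v ≠ 0 := by
  simp [v, map_ne_zero_iff _ (IsFractionRing.injective (MvPolynomial (Fin 2) ℚ) QVT),
    MvPolynomial.X_ne_zero]

lemma t_ne_zero : t ≠ 0 := by
  simp [t, map_ne_zero_iff _ (IsFractionRing.injective (MvPolynomial (Fin 2) ℚ) QVT),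
    MvPolynomial.X_ne_zero]

lemma wt_one : wt (1 : FreeMonoid I) = 0 := by
  simp [wt]

lemma wt_mul (p q : FreeMonoid I) : wt (p * q) = wt p + wt q := by
  simp [wt, FreeMonoid.toList_mul]

section Pairing

variable (C : I → I → ℤ)

lemma pairF_zero_left (b : I →₀ ℕ) : pairF C 0 b = 0 := by
  simp [pairF]

lemma pairF_zero_right (a : I →₀ ℕ) : pairF C a 0 = 0 := by
  simp [pairF]

lemma pairF_add_left (a b c : I →₀ ℕ) :
    pairF C (a + b) c = pairF C a c + pairF C b c := by
  unfold pairF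
  rw [Finsupp.sum_add_index' (fun _ => by simp)]
  intro i m n
  rw [← Finsupp.sum_add]
  congr 1; funext j k; push_cast; ring

lemma pairF_add_right (a b c : I →₀ ℕ) :
    pairF C a (b + c) = pairF C a b + pairF C a c := by
  unfold pairF
  rw [← Finsupp.sum_add]
  congr 1; funext i m
  rw [Finsupp.sum_add_index' (fun _ => by simp)]
  intro j k l; push_cast; ring

lemma dotF_comm (a b : I →₀ ℕ) : dotF C a b = dotF C b a := by
  simp [dotF, add_comm]

lemma tw_ne_zero (a b : I →₀ ℕ) : tw C a b ≠ 0 :=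
  mul_ne_zero (zpow_ne_zero _ v_ne_zero) (zpow_ne_zero _ t_ne_zero)

lemma tw_zero_left (b : I →₀ ℕ) : tw C 0 b = 1 := by
  simp [tw, dotF, pairF_zero_left, pairF_zero_right]

lemma tw_zero_right (a : I →₀ ℕ) : tw C a 0 = 1 := by
  simp [tw, dotF, pairF_zero_left, pairF_zero_right]

lemma tw_add_left (a b c : I →₀ ℕ) : tw C (a + b) c = tw C a c * tw C b c := by
  simp only [tw, dotF, pairF_add_left, pairF_add_right, neg_add, sub_eq_add_neg,
    zpow_add₀ v_ne_zero, zpow_add₀ t_ne_zero, zpow_neg]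
  ring

lemma tw_add_right (a b c : I →₀ ℕ) : tw C a (b + c) = tw C a b * tw C a c := by
  simp only [tw, dotF, pairF_add_left, pairF_add_right, neg_add, sub_eq_add_neg,
    zpow_add₀ v_ne_zero, zpow_add₀ t_ne_zero, zpow_neg]
  ring

lemma map_tw {barK : QVT →+* QVT} (hv : barK v = v⁻¹) (ht : barK t = t) (a b : I →₀ ℕ) :
    barK (tw C a b) = (tw C b a)⁻¹ := by
  rw [tw, tw, map_mul, map_zpow₀, map_zpow₀, hv, ht, inv_zpow, ← zpow_neg, dotF_comm,
    mul_inv, ← zpow_neg, ← zpow_neg, neg_sub]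

end Pairing

section TwistedSquare

variable (C : I → I → ℤ)

lemma mulG_single_single (p q : FreeMonoid I × FreeMonoid I) (c d : QVT) :
    mulG C (Finsupp.single p c) (Finsupp.single q d)
      = Finsupp.single (p.1 * q.1, p.2 * q.2) (tw C (wt q.1) (wt p.2) * (c * d)) := by
  simp [mulG]

lemma mulG_zero_left (g : GG I) : mulG C 0 g = 0 := Finsupp.sum_zero_index

lemma mulG_zero_right (f : GG I) : mulG C f 0 = 0 := by
  simp [mulG]

lemma mulG_add_left (f₁ f₂ g : GG I) :
    mulG C (f₁ + f₂) g = mulG C f₁ g + mulG C f₂ g := by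
  unfold mulG
  rw [Finsupp.sum_add_index' (fun _ => by simp)]
  intro p c d
  rw [← Finsupp.sum_add]
  congr 1; funext q e
  rw [← Finsupp.single_add, ← mul_add, add_mul]

lemma mulG_add_right (f g₁ g₂ : GG I) :
    mulG C f (g₁ + g₂) = mulG C f g₁ + mulG C f g₂ := by
  unfold mulG
  rw [← Finsupp.sum_add]
  congr 1; funext p c
  rw [Finsupp.sum_add_index' (fun _ => by simp)]
  intro q d e
  rw [← Finsupp.single_add, ← mul_add, mul_add]

variable (barK : QVT →+* QVT)

def barSwap (g : GG I) : GG I :=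
  g.sum fun p c => Finsupp.single (p.2, p.1) (tw C (wt p.2) (wt p.1) * barK c)

lemma barSwap_zero : barSwap C barK 0 = 0 := Finsupp.sum_zero_index

lemma barSwap_single (p : FreeMonoid I × FreeMonoid I) (c : QVT) :
    barSwap C barK (Finsupp.single p c)
      = Finsupp.single (p.2, p.1) (tw C (wt p.2) (wt p.1) * barK c) := by
  simp [barSwap]

lemma barSwap_add (f g : GG I) :
    barSwap C barK (f + g) = barSwap C barK f + barSwap C barK g := by
  unfold barSwap
  rw [Finsupp.sum_add_index' (fun _ => by simp)]
  intro p c d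
  rw [map_add, mul_add, Finsupp.single_add]

lemma barSwap_smul (c : QVT) (g : GG I) :
    barSwap C barK (c • g) = barK c • barSwap C barK g := by
  unfold barSwap
  rw [Finsupp.smul_sum, Finsupp.sum_smul_index (fun _ => by simp)]
  congr 1; funext p d
  rw [Finsupp.smul_single, smul_eq_mul, map_mul, mul_left_comm]

lemma barSwap_mulG_single (hv : barK v = v⁻¹) (ht : barK t = t)
    (p q : FreeMonoid I × FreeMonoid I) (c d : QVT) :
    barSwap C barK (mulG C (Finsupp.single p c) (Finsupp.single q d))
      = mulG C (barSwap C barK (Finsupp.single p c)) (barSwap C barK (Finsupp.single q d)) := by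
  simp only [mulG_single_single, barSwap_single, wt_mul, map_mul, map_tw C hv ht,
    tw_add_left, tw_add_right]
  congr 1
  -- the cross factor `tw |p.2| |q.1|` of the twisted product cancels against `bar (tw |q.1| |p.2|)`
  field_simp [tw_ne_zero C (wt p.2) (wt q.1)]

lemma barSwap_mulG (hv : barK v = v⁻¹) (ht : barK t = t) (f g : GG I) :
    barSwap C barK (mulG C f g) = mulG C (barSwap C barK f) (barSwap C barK g) := by
  induction f using Finsupp.induction_linear with
  | zero => rw [mulG_zero_left, barSwap_zero, mulG_zero_left]
  | add f₁ f₂ ih₁ ih₂ => rw [mulG_add_left, barSwap_add, barSwap_add, mulG_add_left, ih₁, ih₂]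
  | single p c =>
    induction g using Finsupp.induction_linear with
    | zero => rw [mulG_zero_right, barSwap_zero, mulG_zero_right]
    | add g₁ g₂ ih₁ ih₂ =>
      rw [mulG_add_right, barSwap_add, barSwap_add, mulG_add_right, ih₁, ih₂]
    | single q d => exact barSwap_mulG_single C barK hv ht p q c d

lemma barSwap_rW (hv : barK v = v⁻¹) (ht : barK t = t) (w : List I) :
    barSwap C barK (rW C w) = rW C w := by
  induction w with
  | nil => simp [rW, barSwap_single, wt_one, tw_zero_left]
  | cons i w ih =>
    rw [rW, barSwap_mulG C barK hv ht, ih, barSwap_add, barSwap_single, barSwap_single]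
    simp [wt_one, tw_zero_left, tw_zero_right, add_comm]

end TwistedSquare

lemma rF_barF (C : I → I → ℤ) {barK : QVT →+* QVT} (hv : barK v = v⁻¹) (ht : barK t = t)
    (x : FF I) : rF C (barF barK x) = barSwap C barK (rF C x) := by
  unfold rF barF
  rw [Finsupp.sum_mapRange_index (fun p => zero_smul QVT (rW C p.toList))]
  induction x using Finsupp.induction_linear with
  | zero => simp [barSwap_zero]
  | add f g ihf ihg =>
    rw [Finsupp.sum_add_index' (fun _ => by simp) (fun _ _ _ => by rw [map_add, add_smul]),
      Finsupp.sum_add_index' (fun _ => by simp) (fun _ _ _ => add_smul _ _ _), barSwap_add,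
      ihf, ihg]
  | single w c =>
    rw [Finsupp.sum_single_index (by simp), Finsupp.sum_single_index (by simp),
      barSwap_smul, barSwap_rW C barK hv ht]

end

theorem bar_comultiplication_general (C : I → I → ℤ)
    (barK : QVT →+* QVT) (hv : barK v = v⁻¹) (ht : barK t = t)
    (x : FF I) :
    rF C (barF barK x)
      = (rF C x).sum fun p c =>
          Finsupp.single (p.2, p.1)
            (v ^ (-(dotF C (wt p.1) (wt p.2)))
              * t ^ (pairF C (wt p.2) (wt p.1) - pairF C (wt p.1) (wt p.2))
              * barK c) := by
  rw [rF_barF C hv ht, barSwap]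
  refine Finsupp.sum_congr fun p _ => ?_
  rw [tw, dotF_comm]

theorem bar_comultiplication (C : I → I → ℤ)
    (barK : QVT →+* QVT) (hv : barK v = v⁻¹) (ht : barK t = t)
    (x : FF I) (ν : I →₀ ℕ) (hx : ∀ w ∈ x.support, wt w = ν) :
    rF C (barF barK x)
      = (rF C x).sum fun p c =>
          Finsupp.single (p.2, p.1)
            (v ^ (-(dotF C (wt p.1) (wt p.2)))
              * t ^ (pairF C (wt p.2) (wt p.1) - pairF C (wt p.1) (wt p.2))
              * barK c) :=
  bar_comultiplication_general C barK hv ht x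

end
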